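/- Let d, n be positive integers and let μ be a probability measure on ℝ^d that is absolutely continuous with respect to d-dimensional Lebesgue measure. Let a_1, …, a_n be i.i.d. random vectors with law μ (i.e., consider the product measure μ^{⊗n} on (ℝ^d)^n), forming the rows of a random matrix A ∈ ℝ^{n×d}. Let Q ⊆ ℝ be an arbitrary set and let S ⊆ ℝ be a finite set with 0 ∉ S. Then for μ^{⊗n}-almost every (a_1,…,a_n) the following holds: for every λ > 0, every x ∈ ℝ^d and every δ ∈ ℝ^n such that for each coordinate i with x_i ∉ Q one has (A^T δ)_i ∈ λ·S := {λs : s ∈ S}, the number of coordinates i with x_i ∉ Q is at most n. Equivalently, with probability one, every such point x has quantization rate qr(x) := |{i : x_i ∈ Q}|/d ≥ 1 − n/d. -/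

import Mathlib

/-!
Restrict everything to the set `T` of non-quantized coordinates. The criticality condition says that
`λ⁻¹ (Aᵀδ)|_T` is a vector of `S^T`, hence nonzero, lying in the span of the `n` restricted rows
`a_j|_T ∈ ℝ^T`. If `|T| > n`, this is a null event for each of the finitely many candidates: a law
absolutely continuous w.r.t. Lebesgue measure charges no proper subspace, so adding the rows one at a
time keeps `(v, a_1|_T, …, a_k|_T)` linearly independent almost surely, as long as `k < |T|`.
-/

open MeasureTheory Module Set Submodule

theorem MeasureTheory.Measure.ae_pi_of_ae_ae_snoc {Ω : Type*} [MeasurableSpace Ω] {μ : Measure Ω}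
    [SigmaFinite μ] {k : ℕ} {p : (Fin (k + 1) → Ω) → Prop} (hp : MeasurableSet {ω | p ω})
    (h : ∀ᵐ ω ∂(Measure.pi fun _ : Fin k => μ), ∀ᵐ y ∂μ, p (Fin.snoc ω y)) :
    ∀ᵐ ω ∂(Measure.pi fun _ => μ), p ω := by
  let e := MeasurableEquiv.piFinSuccAbove (fun _ : Fin (k + 1) => Ω) (Fin.last k)
  have he : ∀ q, e.symm q = Fin.snoc q.2 q.1 := fun q => Fin.insertNth_last' q.1 q.2
  have hprod : ∀ᵐ q ∂μ.prod (Measure.pi fun _ : Fin k => μ), p (e.symm q) := by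
    have hmeas : MeasurableSet {q : Ω × (Fin k → Ω) | p (Fin.snoc q.2 q.1)} := by
      simpa only [preimage_ofPred_eq, he] using e.symm.measurable hp
    rw [ae_prod_iff_ae_ae (by simpa only [he] using hmeas)]
    simpa only [he] using (Measure.ae_ae_comm hmeas).2 h
  refine ((measurePreserving_piFinSuccAbove (fun _ => μ) (Fin.last k)).quasiMeasurePreserving.ae
    hprod).mono fun ω hω => ?_
  rwa [e.symm_apply_apply] at hω

section RandomFamilies

variable {Ω E : Type*} [MeasurableSpace Ω] {μ : Measure Ω} [SigmaFinite μ]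
  [NormedAddCommGroup E] [NormedSpace ℝ E] [FiniteDimensional ℝ E] [MeasurableSpace E]
  [BorelSpace E] {r : Ω → E}

theorem ae_linearIndependent_fin_cons (hr : Measurable r)
    (hμr : ∀ W : Submodule ℝ E, W ≠ ⊤ → ∀ᵐ ω ∂μ, r ω ∉ W) {v : E} (hv : v ≠ 0) :
    ∀ k < finrank ℝ E, ∀ᵐ ω ∂(Measure.pi fun _ : Fin k => μ),
      LinearIndependent ℝ (Fin.cons v (r ∘ ω) : Fin (k + 1) → E) := by
  intro k
  induction k with
  | zero =>
    exact fun _ => .of_forall fun ω =>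
      linearIndependent_finCons.2 ⟨linearIndependent_empty_type, by simpa using hv⟩
  | succ k ih =>
    intro hk
    have hmeas : MeasurableSet {ω : Fin (k + 1) → Ω |
        LinearIndependent ℝ (Fin.cons v (r ∘ ω) : Fin (k + 2) → E)} :=
      isOpen_setOfPred_linearIndependent.measurableSet.preimage (by fun_prop)
    refine Measure.ae_pi_of_ae_ae_snoc hmeas ?_
    filter_upwards [ih (by omega)] with ω hω
    have hW : span ℝ (range (Fin.cons v (r ∘ ω) : Fin (k + 1) → E)) ≠ ⊤ := by
      intro htop
      have := finrank_range_le_card (R := ℝ) (Fin.cons v (r ∘ ω) : Fin (k + 1) → E)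
      rw [Set.finrank, htop, finrank_top, Fintype.card_fin] at this
      omega
    filter_upwards [hμr _ hW] with y hy
    rw [Fin.comp_snoc, Fin.cons_snoc_eq_snoc_cons]
    exact linearIndependent_finSnoc.2 ⟨hω, hy⟩

theorem ae_notMem_span_range (hr : Measurable r)
    (hμr : ∀ W : Submodule ℝ E, W ≠ ⊤ → ∀ᵐ ω ∂μ, r ω ∉ W) {v : E} (hv : v ≠ 0) {k : ℕ}
    (hk : k < finrank ℝ E) :
    ∀ᵐ ω ∂(Measure.pi fun _ : Fin k => μ), v ∉ span ℝ (range (r ∘ ω)) :=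
  (ae_linearIndependent_fin_cons hr hμr hv k hk).mono fun _ h => (linearIndependent_finCons.1 h).2

end RandomFamilies

theorem ae_apply_notMem_of_absolutelyContinuous {E F : Type*} [NormedAddCommGroup E]
    [NormedSpace ℝ E] [MeasurableSpace E] [BorelSpace E] [FiniteDimensional ℝ E]
    [AddCommGroup F] [Module ℝ F] {μ ν : Measure E} [ν.IsAddHaarMeasure] (hμ : μ ≪ ν)
    {L : E →ₗ[ℝ] F} (hL : Function.Surjective L) {W : Submodule ℝ F} (hW : W ≠ ⊤) :
    ∀ᵐ x ∂μ, L x ∉ W := by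
  have hcomap : W.comap L ≠ ⊤ := fun h => hW <| by
    rw [← map_comap_eq_of_surjective hL W, h, Submodule.map_top, LinearMap.range_eq_top.2 hL]
  exact hμ.ae_le (measure_eq_zero_iff_ae_notMem.1 (Measure.addHaar_submodule ν _ hcomap))

theorem ae_notMem_span_range_restrict {ι : Type*} [Fintype ι] {μ : Measure (ι → ℝ)}
    [SigmaFinite μ] (hμ : μ ≪ volume) {n : ℕ} {T : Finset ι} (hT : n < T.card) {v : T → ℝ}
    (hv : v ≠ 0) :
    ∀ᵐ a ∂(Measure.pi fun _ : Fin n => μ), v ∉ span ℝ (range fun j (i : T) => a j i) := by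
  have hr : Measurable fun (x : ι → ℝ) (i : T) => x i := by fun_prop
  have hμr : ∀ W : Submodule ℝ (T → ℝ), W ≠ ⊤ → ∀ᵐ x ∂μ, (fun i : T => x i) ∉ W :=
    fun W hW => ae_apply_notMem_of_absolutelyContinuous hμ
      (LinearMap.funLeft_surjective_of_injective ℝ ℝ _ Subtype.val_injective) hW
  exact ae_notMem_span_range hr hμr hv (by simpa using hT)

theorem par_quantization_glm
    (d n : ℕ)
    (μ : Measure (Fin d → ℝ)) [IsProbabilityMeasure μ]
    (hμ : μ ≪ (volume : Measure (Fin d → ℝ)))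
    (Q : Set ℝ) (S : Finset ℝ) (hS : (0 : ℝ) ∉ S) :
    ∀ᵐ a : Fin n → (Fin d → ℝ) ∂(Measure.pi fun _ : Fin n => μ),
      ∀ lam : ℝ, 0 < lam →
        ∀ x : Fin d → ℝ, ∀ δ : Fin n → ℝ,
          (∀ i : Fin d, x i ∉ Q → ∃ s ∈ S, (∑ j : Fin n, δ j * a j i) = lam * s) →
          {i : Fin d | x i ∉ Q}.ncard ≤ n := by
  classical
  have hae : ∀ᵐ a : Fin n → (Fin d → ℝ) ∂(Measure.pi fun _ : Fin n => μ),
      ∀ T : Finset (Fin d), n < T.card → ∀ v ∈ univ.pi fun _ : T => (S : Set ℝ),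
        v ∉ span ℝ (range fun j (i : T) => a j i) := by
    refine ae_all_iff.2 fun T => Filter.eventually_imp_distrib_left.2 fun hT =>
      (ae_ball_iff (Finite.pi fun _ => S.finite_toSet).countable).2 fun v hv => ?_
    obtain ⟨i, hi⟩ := Finset.card_pos.1 (by omega : 0 < T.card)
    exact ae_notMem_span_range_restrict hμ hT
      fun h => hS (by simpa [h] using hv ⟨i, hi⟩ (mem_univ _))
  filter_upwards [hae] with a ha lam hlam x δ hcond
  by_contra! hcard
  refine ha {i | x i ∉ Q}.toFinset (by rwa [ncard_eq_toFinset_card'] at hcard)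
    (fun i => lam⁻¹ * ∑ j, δ j * a j i) (fun i _ => ?_) ?_
  · obtain ⟨s, hs, hsum⟩ := hcond i (by simpa using i.2)
    change lam⁻¹ * _ ∈ S
    rwa [hsum, inv_mul_cancel_left₀ hlam.ne']
  · exact (mem_span_range_iff_exists_fun ℝ).2
      ⟨fun j => lam⁻¹ * δ j, by ext i; simp [Finset.mul_sum, mul_assoc]⟩
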